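/- arXiv:2411.09257 — 2 statements merged into one kernel-verified Lean document; each statement's English description precedes it below -/
import Mathlib

section
/- For every n ∈ ℕ₀, q̂(n) = Σ_{(n₁,…,n_k)∈Ω(k,n)} (Π_{j=1}^k λ_j^{n_j}/n_j!) · Σ_{r₁+⋯+r_{k₀}=z_k} z_k! · Π_{j₀=1}^{k₀} (j₀^{r_{j₀}}/r_{j₀}!) e^{−ρ_{j₀}(1−e^{−j₀λ})} 𝓑_{r_{j₀}}(ρ_{j₀} e^{−j₀λ}), where z_k = n₁+⋯+n_k and the inner sum ranges over all (r₁,…,r_{k₀}) ∈ ℕ₀^{k₀} with r₁+⋯+r_{k₀} = z_k. -/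
/-- GCP state probabilities: `p(n,t) = ∑_{Ω(k,n)} ∏_j ((λ_j t)^{x_j}/x_j!) e^{−λ_j t}`,
where index `j : Fin k` encodes jump size `j+1`. -/
noncomputable def gcpPmf (k : ℕ) (lam : Fin k → ℝ) (n : ℕ) (t : ℝ) : ℝ :=
  ∑' x : Fin k → ℕ,
    if (∑ j : Fin k, ((j : ℕ) + 1) * x j) = n then
      ∏ j : Fin k, (lam j * t) ^ (x j) / (Nat.factorial (x j)) * Real.exp (-(lam j * t))
    else 0

/-- Non-homogeneous GCP state probabilities with cumulative rates `ρ_{j₀}`: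
`p_ρ(m) = ∑_{Ω(k₀,m)} ∏_{j₀} (ρ_{j₀}^{x_{j₀}}/x_{j₀}!) e^{−ρ_{j₀}}`. -/
noncomputable def nhGcpPmf (k0 : ℕ) (rho : Fin k0 → ℝ) (m : ℕ) : ℝ :=
  ∑' x : Fin k0 → ℕ,
    if (∑ j0 : Fin k0, ((j0 : ℕ) + 1) * x j0) = m then
      ∏ j0 : Fin k0, rho j0 ^ (x j0) / (Nat.factorial (x j0)) * Real.exp (-(rho j0))
    else 0

/-- Non-homogeneous IGCP state probabilities: `q̂(n) = ∑_{m=0}^∞ p(n,m) p_ρ(m)`. -/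
noncomputable def nhIgcpPmf (k : ℕ) (lam : Fin k → ℝ) (k0 : ℕ) (rho : Fin k0 → ℝ)
    (n : ℕ) : ℝ :=
  ∑' m : ℕ, gcpPmf k lam n m * nhGcpPmf k0 rho m

/-- The `n`-th order Bell polynomial `𝓑_n(x) = e^{−x} ∑_{r=0}^∞ r^n x^r / r!`. -/
noncomputable def bellPoly (n : ℕ) (x : ℝ) : ℝ :=
  Real.exp (-x) * ∑' r : ℕ, (r : ℝ) ^ n * x ^ r / (Nat.factorial r)

open Finset
open scoped ENNReal Nat

/-!
Expanding `p(n, m)` over `Ω(k, n)` writes `q̂(n)` as a finite combination of the tilted moments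
`∑ₘ mᶻ e^{-λm} p_ρ(m)`, `z = n₁ + ⋯ + n_k`. Regrouping the series defining `p_ρ` by the value of
`m` turns a tilted moment into `∑_y (∑ⱼ (j+1) yⱼ)ᶻ ∏ⱼ cⱼ^{yⱼ}/yⱼ! e^{-ρⱼ}` with
`cⱼ = ρⱼ e^{-(j+1)λ}`, and the multinomial theorem splits each power into products of
one-dimensional series `∑_y yʳ cʸ/y! = e^c 𝓑_r(c)`. All series involved have nonnegative terms,
so the rearrangements are done in `ℝ≥0∞`, where they need no summability, and the value is
brought back to `ℝ` with `toReal`.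
-/

theorem tsum_ite_eq_sum_of_iff {α M : Type*} [AddCommMonoid M] [TopologicalSpace M]
    {s : Finset α} {p : α → Prop} [DecidablePred p] (hs : ∀ x, x ∈ s ↔ p x) (f : α → M) :
    ∑' x, (if p x then f x else 0) = ∑ x ∈ s, f x :=
  (tsum_eq_sum fun x hx => if_neg ((hs x).not.1 hx)).trans
    (sum_congr rfl fun x hx => if_pos ((hs x).1 hx))

theorem ENNReal.prod_univ_tsum {K : ℕ} {β : Fin K → Type*} (f : ∀ j, β j → ℝ≥0∞) :
    ∏ j, ∑' b, f j b = ∑' y : (∀ j, β j), ∏ j, f j (y j) := by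
  induction K with
  | zero => simp
  | succ K ih =>
    rw [← (Fin.consEquiv β).tsum_eq, ENNReal.tsum_prod', Fin.prod_univ_succ,
      ← ENNReal.tsum_mul_right, ih]
    refine tsum_congr fun b => ?_
    rw [← ENNReal.tsum_mul_left]
    refine tsum_congr fun y => ?_
    simp [Fin.consEquiv, Fin.prod_univ_succ]

theorem ENNReal.tsum_sum_mul_pow_mul_prod {K : ℕ} (a : Fin K → ℝ≥0∞) (F : Fin K → ℕ → ℝ≥0∞)
    (z : ℕ) :
    ∑' y : Fin K → ℕ, (∑ j, a j * y j) ^ z * ∏ j, F j (y j) =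
      ∑ r ∈ univ.piAntidiag z,
        Nat.multinomial univ r * ∏ j, a j ^ r j * ∑' m : ℕ, (m : ℝ≥0∞) ^ r j * F j m := by
  simp_rw [sum_pow_eq_sum_piAntidiag, sum_mul]
  rw [Summable.tsum_finsetSum fun _ _ => ENNReal.summable]
  refine sum_congr rfl fun r _ => ?_
  simp_rw [← ENNReal.tsum_mul_left, ENNReal.prod_univ_tsum, mul_assoc, ENNReal.tsum_mul_left,
    ← prod_mul_distrib, mul_pow, mul_assoc]

theorem Nat.cast_multinomial_mul_prod {ι K : Type*} [Field K] [CharZero K] (s : Finset ι)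
    (r : ι → ℕ) (A : ι → K) :
    (Nat.multinomial s r : K) * ∏ i ∈ s, A i = (∑ i ∈ s, r i)! * ∏ i ∈ s, A i / (r i)! := by
  have hfact : ∏ i ∈ s, ((r i)! : K) ≠ 0 :=
    prod_ne_zero_iff.2 fun i _ => Nat.cast_ne_zero.2 (Nat.factorial_ne_zero _)
  rw [← Nat.multinomial_spec s r, prod_div_distrib]
  push_cast
  field_simp

theorem summable_pow_mul_pow_div_factorial (r : ℕ) {x : ℝ} (hx : 0 ≤ x) :
    Summable fun m : ℕ => (m : ℝ) ^ r * x ^ m / m ! := by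
  refine .of_nonneg_of_le (fun m => by positivity) (fun m => ?_)
    (Real.summable_pow_div_factorial (2 ^ r * x))
  have hm : (m : ℝ) ^ r ≤ (2 ^ r) ^ m := by
    rw [← pow_mul, mul_comm, pow_mul]
    exact pow_le_pow_left₀ m.cast_nonneg (mod_cast m.lt_two_pow_self.le) r
  rw [mul_pow]
  gcongr

theorem exp_mul_bellPoly (r : ℕ) (x : ℝ) :
    Real.exp x * bellPoly r x = ∑' m : ℕ, (m : ℝ) ^ r * x ^ m / m ! := by
  rw [bellPoly, ← mul_assoc, ← Real.exp_add, add_neg_cancel, Real.exp_zero, one_mul]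

theorem bellPoly_nonneg (r : ℕ) {x : ℝ} (hx : 0 ≤ x) : 0 ≤ bellPoly r x :=
  mul_nonneg (Real.exp_nonneg _) (tsum_nonneg fun m => by positivity)

theorem tsum_natCast_pow_mul_ofReal_pow_div_factorial (r : ℕ) {x : ℝ} (hx : 0 ≤ x) :
    ∑' m : ℕ, (m : ℝ≥0∞) ^ r * ENNReal.ofReal (x ^ m / m !) =
      ENNReal.ofReal (Real.exp x * bellPoly r x) := by
  rw [exp_mul_bellPoly, ENNReal.ofReal_tsum_of_nonneg (fun m => by positivity)
    (summable_pow_mul_pow_div_factorial r hx)]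
  refine tsum_congr fun m => ?_
  rw [mul_div_assoc, ENNReal.ofReal_mul (by positivity), ENNReal.ofReal_pow m.cast_nonneg,
    ENNReal.ofReal_natCast]

/-- The set `Ω(k, n)`, with index `j` standing for jump size `j + 1`. -/
def weightedAntidiag (k n : ℕ) : Finset (Fin k → ℕ) :=
  {x ∈ Fintype.piFinset fun _ => range (n + 1) | ∑ j : Fin k, ((j : ℕ) + 1) * x j = n}

theorem mem_weightedAntidiag {k n : ℕ} {x : Fin k → ℕ} :
    x ∈ weightedAntidiag k n ↔ ∑ j : Fin k, ((j : ℕ) + 1) * x j = n := by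
  refine mem_filter.trans ⟨And.right, fun h => ⟨Fintype.mem_piFinset.2 fun j => ?_, h⟩⟩
  rw [mem_range, Nat.lt_succ_iff]
  calc x j ≤ ((j : ℕ) + 1) * x j := Nat.le_mul_of_pos_left _ j.succ_pos
    _ ≤ n := h ▸ single_le_sum (f := fun i : Fin k => ((i : ℕ) + 1) * x i)
      (fun i _ => Nat.zero_le _) (mem_univ j)

theorem gcpPmf_eq_sum (k : ℕ) (lam : Fin k → ℝ) (n : ℕ) (t : ℝ) :
    gcpPmf k lam n t = ∑ x ∈ weightedAntidiag k n,
      (∏ j, lam j ^ x j / (x j)!) * (t ^ (∑ j, x j) * Real.exp (-((∑ j, lam j) * t))) := by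
  rw [gcpPmf, tsum_ite_eq_sum_of_iff fun _ => mem_weightedAntidiag]
  refine sum_congr rfl fun x _ => ?_
  rw [sum_mul, ← sum_neg_distrib, Real.exp_sum, ← prod_pow_eq_pow_sum, ← prod_mul_distrib,
    ← prod_mul_distrib]
  exact prod_congr rfl fun j _ => by ring

section

variable {k0 : ℕ} {rho : Fin k0 → ℝ}

theorem tsum_ofReal_mul_nhGcpPmf (hrho : ∀ j0, 0 ≤ rho j0)
    {g : ℕ → ℝ} (hg : ∀ m, 0 ≤ g m) :
    ∑' m, ENNReal.ofReal (g m * nhGcpPmf k0 rho m) =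
      ∑' y : Fin k0 → ℕ, ENNReal.ofReal (g (∑ j0 : Fin k0, ((j0 : ℕ) + 1) * y j0) *
        ∏ j0, rho j0 ^ y j0 / (y j0)! * Real.exp (-rho j0)) := by
  calc ∑' m, ENNReal.ofReal (g m * nhGcpPmf k0 rho m)
      = ∑' (m) (y : Fin k0 → ℕ), if ∑ j0 : Fin k0, ((j0 : ℕ) + 1) * y j0 = m then
          ENNReal.ofReal (g (∑ j0 : Fin k0, ((j0 : ℕ) + 1) * y j0) *
            ∏ j0, rho j0 ^ y j0 / (y j0)! * Real.exp (-rho j0)) else 0 := by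
        refine tsum_congr fun m => ?_
        rw [nhGcpPmf, tsum_ite_eq_sum_of_iff fun _ => mem_weightedAntidiag,
          tsum_ite_eq_sum_of_iff fun _ => mem_weightedAntidiag, mul_sum,
          ENNReal.ofReal_sum_of_nonneg fun y _ =>
            mul_nonneg (hg m) (prod_nonneg fun j0 _ => by have := hrho j0; positivity)]
        exact sum_congr rfl fun y hy => by rw [mem_weightedAntidiag.1 hy]
    _ = _ := by
        rw [ENNReal.tsum_comm]
        exact tsum_congr fun y => tsum_ite_eq' _ _

theorem ofReal_pow_mul_exp_mul_prod (hrho : ∀ j0, 0 ≤ rho j0) (L : ℝ) (z : ℕ) (y : Fin k0 → ℕ) :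
    ENNReal.ofReal (((∑ j0 : Fin k0, ((j0 : ℕ) + 1) * y j0 : ℕ) : ℝ) ^ z *
        Real.exp (-(L * (∑ j0 : Fin k0, ((j0 : ℕ) + 1) * y j0 : ℕ))) *
        ∏ j0 : Fin k0, rho j0 ^ y j0 / (y j0)! * Real.exp (-rho j0)) =
      (∑ j0 : Fin k0, (((j0 : ℕ) : ℝ≥0∞) + 1) * y j0) ^ z *
        ∏ j0 : Fin k0, ENNReal.ofReal (Real.exp (-rho j0)) *
          ENNReal.ofReal ((rho j0 * Real.exp (-(((j0 : ℕ) + 1 : ℝ) * L))) ^ y j0 / (y j0)!) := by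
  have hexp : Real.exp (-(L * (∑ j0 : Fin k0, ((j0 : ℕ) + 1) * y j0 : ℕ))) =
      ∏ j0 : Fin k0, Real.exp (-(((j0 : ℕ) + 1 : ℝ) * L)) ^ y j0 := by
    simp_rw [← Real.exp_nat_mul, ← Real.exp_sum]
    push_cast
    rw [mul_sum, ← sum_neg_distrib]
    exact congrArg Real.exp (sum_congr rfl fun j0 _ => by ring)
  rw [hexp, mul_assoc, ← prod_mul_distrib, ENNReal.ofReal_mul (by positivity),
    ENNReal.ofReal_pow (Nat.cast_nonneg _), ENNReal.ofReal_natCast,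
    ENNReal.ofReal_prod_of_nonneg fun j0 _ => by have := hrho j0; positivity]
  push_cast
  refine congrArg _ (prod_congr rfl fun j0 _ => ?_)
  rw [← ENNReal.ofReal_mul (Real.exp_nonneg _)]
  exact congrArg _ (by ring)

theorem nhGcpPmf_nonneg (hrho : ∀ j0, 0 ≤ rho j0) (m : ℕ) :
    0 ≤ nhGcpPmf k0 rho m :=
  tsum_nonneg fun y => by
    split_ifs
    · exact prod_nonneg fun j0 _ => by have := hrho j0; positivity
    · exact le_rfl

theorem tsum_ofReal_pow_mul_exp_mul_nhGcpPmf (hrho : ∀ j0, 0 ≤ rho j0) (L : ℝ) (z : ℕ) :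
    ∑' m : ℕ, ENNReal.ofReal ((m : ℝ) ^ z * Real.exp (-(L * m)) * nhGcpPmf k0 rho m) =
      ∑ r ∈ univ.piAntidiag z, Nat.multinomial univ r *
        ∏ j0 : Fin k0, (((j0 : ℕ) : ℝ≥0∞) + 1) ^ r j0 * (ENNReal.ofReal (Real.exp (-rho j0)) *
          ENNReal.ofReal (Real.exp (rho j0 * Real.exp (-(((j0 : ℕ) + 1 : ℝ) * L))) *
            bellPoly (r j0) (rho j0 * Real.exp (-(((j0 : ℕ) + 1 : ℝ) * L))))) := by
  rw [tsum_ofReal_mul_nhGcpPmf hrho (g := fun m : ℕ => (m : ℝ) ^ z * Real.exp (-(L * m)))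
      fun m => by positivity, tsum_congr fun y => ofReal_pow_mul_exp_mul_prod hrho L z y]
  refine (ENNReal.tsum_sum_mul_pow_mul_prod _ (fun j0 m => ENNReal.ofReal (Real.exp (-rho j0)) *
    ENNReal.ofReal ((rho j0 * Real.exp (-(((j0 : ℕ) + 1 : ℝ) * L))) ^ m / m !)) z).trans
    (sum_congr rfl fun r _ => congrArg _ (prod_congr rfl fun j0 _ => congrArg _ ?_))
  simp_rw [mul_left_comm _ (ENNReal.ofReal (Real.exp _)), ENNReal.tsum_mul_left,
    tsum_natCast_pow_mul_ofReal_pow_div_factorial _ (mul_nonneg (hrho j0) (Real.exp_nonneg _))]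

theorem hasSum_pow_mul_exp_mul_nhGcpPmf (hrho : ∀ j0, 0 ≤ rho j0) (L : ℝ) (z : ℕ) :
    HasSum (fun m : ℕ => (m : ℝ) ^ z * Real.exp (-(L * m)) * nhGcpPmf k0 rho m)
      (∑' r : Fin k0 → ℕ,
        if ∑ j0 : Fin k0, r j0 = z then
          (z ! : ℝ) * ∏ j0 : Fin k0, (((j0 : ℕ) + 1 : ℝ) ^ r j0 / (r j0)!) *
            Real.exp (-(rho j0 * (1 - Real.exp (-(((j0 : ℕ) + 1 : ℝ) * L))))) *
            bellPoly (r j0) (rho j0 * Real.exp (-(((j0 : ℕ) + 1 : ℝ) * L)))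
        else 0) := by
  have hmoment := tsum_ofReal_pow_mul_exp_mul_nhGcpPmf hrho L z
  set c : Fin k0 → ℝ := fun j0 => rho j0 * Real.exp (-(((j0 : ℕ) + 1 : ℝ) * L)) with hc_def
  have hfinite : ∀ r ∈ univ.piAntidiag z, Nat.multinomial univ r *
      ∏ j0 : Fin k0, (((j0 : ℕ) : ℝ≥0∞) + 1) ^ r j0 * (ENNReal.ofReal (Real.exp (-rho j0)) *
        ENNReal.ofReal (Real.exp (c j0) * bellPoly (r j0) (c j0))) ≠ ∞ := fun r _ =>
    ENNReal.mul_ne_top (ENNReal.natCast_ne_top _) <| ENNReal.prod_ne_top fun j0 _ =>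
      ENNReal.mul_ne_top (ENNReal.pow_ne_top (ENNReal.add_ne_top.2
        ⟨ENNReal.natCast_ne_top _, ENNReal.one_ne_top⟩))
        (ENNReal.mul_ne_top ENNReal.ofReal_ne_top ENNReal.ofReal_ne_top)
  convert ENNReal.hasSum_toReal (hmoment ▸ ENNReal.sum_ne_top.2 hfinite) using 1
  · funext m
    exact (ENNReal.toReal_ofReal (by have := nhGcpPmf_nonneg hrho m; positivity)).symm
  rw [← ENNReal.tsum_toReal_eq fun _ => ENNReal.ofReal_ne_top, hmoment,
    ENNReal.toReal_sum hfinite, tsum_ite_eq_sum_of_iff fun r =>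
      mem_piAntidiag.trans (and_iff_left fun _ _ => mem_univ _)]
  refine sum_congr rfl fun r hr => ?_
  rw [← (mem_piAntidiag.1 hr).1]
  simp only [ENNReal.toReal_mul, ENNReal.toReal_prod, ENNReal.toReal_natCast, ENNReal.toReal_pow]
  rw [Nat.cast_multinomial_mul_prod]
  refine congrArg _ (prod_congr rfl fun j0 _ => ?_)
  have hexp : Real.exp (-(rho j0 * (1 - Real.exp (-(((j0 : ℕ) + 1 : ℝ) * L))))) =
      Real.exp (-rho j0) * Real.exp (c j0) := by
    rw [← Real.exp_add, hc_def]
    ring_nf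
  have hc : 0 ≤ c j0 := mul_nonneg (hrho j0) (Real.exp_nonneg _)
  rw [ENNReal.toReal_add (ENNReal.natCast_ne_top _) ENNReal.one_ne_top, ENNReal.toReal_natCast,
    ENNReal.toReal_one, ENNReal.toReal_ofReal (Real.exp_nonneg _),
    ENNReal.toReal_ofReal (mul_nonneg (Real.exp_nonneg _) (bellPoly_nonneg _ hc)), hexp]
  ring

end

theorem nhIgcp_pmf_bell_general (k : ℕ) (lam : Fin k → ℝ)
    (k0 : ℕ) (rho : Fin k0 → ℝ) (hrho : ∀ j0, 0 ≤ rho j0) (n : ℕ) :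
    nhIgcpPmf k lam k0 rho n =
      ∑' nv : Fin k → ℕ,
        if (∑ j : Fin k, ((j : ℕ) + 1) * nv j) = n then
          (∏ j : Fin k, lam j ^ (nv j) / (Nat.factorial (nv j))) *
            ∑' r : Fin k0 → ℕ,
              if (∑ j0 : Fin k0, r j0) = (∑ j : Fin k, nv j) then
                (Nat.factorial (∑ j : Fin k, nv j) : ℝ) *
                  ∏ j0 : Fin k0,
                    (((j0 : ℕ) + 1 : ℝ) ^ (r j0) / (Nat.factorial (r j0))) *
                      Real.exp (-(rho j0 *
                        (1 - Real.exp (-(((j0 : ℕ) + 1 : ℝ) * ∑ j : Fin k, lam j))))) *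
                      bellPoly (r j0)
                        (rho j0 * Real.exp (-(((j0 : ℕ) + 1 : ℝ) * ∑ j : Fin k, lam j)))
              else 0
        else 0 := by
  have hterm (x : Fin k → ℕ) := (hasSum_pow_mul_exp_mul_nhGcpPmf hrho (∑ j, lam j)
    (∑ j, x j)).mul_left (∏ j, lam j ^ x j / (x j)!)
  rw [tsum_ite_eq_sum_of_iff fun _ => mem_weightedAntidiag,
    ← (hasSum_sum fun x _ => hterm x).tsum_eq, nhIgcpPmf]
  refine tsum_congr fun m => ?_
  rw [gcpPmf_eq_sum, sum_mul]
  exact sum_congr rfl fun x _ => mul_assoc _ _ _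

/-- state probabilities of the non-homogeneous IGCP in terms of Bell
polynomials. -/
theorem nhIgcp_pmf_bell (k : ℕ) (hk : 0 < k) (lam : Fin k → ℝ) (hlam : ∀ j, 0 < lam j)
    (k0 : ℕ) (hk0 : 0 < k0) (rho : Fin k0 → ℝ) (hrho : ∀ j0, 0 ≤ rho j0) (n : ℕ) :
    nhIgcpPmf k lam k0 rho n =
      ∑' nv : Fin k → ℕ,
        if (∑ j : Fin k, ((j : ℕ) + 1) * nv j) = n then
          (∏ j : Fin k, lam j ^ (nv j) / (Nat.factorial (nv j))) *
            ∑' r : Fin k0 → ℕ,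
              if (∑ j0 : Fin k0, r j0) = (∑ j : Fin k, nv j) then
                (Nat.factorial (∑ j : Fin k, nv j) : ℝ) *
                  ∏ j0 : Fin k0,
                    (((j0 : ℕ) + 1 : ℝ) ^ (r j0) / (Nat.factorial (r j0))) *
                      Real.exp (-(rho j0 *
                        (1 - Real.exp (-(((j0 : ℕ) + 1 : ℝ) * ∑ j : Fin k, lam j))))) *
                      bellPoly (r j0)
                        (rho j0 * Real.exp (-(((j0 : ℕ) + 1 : ℝ) * ∑ j : Fin k, lam j)))
              else 0
        else 0 :=
  nhIgcp_pmf_bell_general k lam k0 rho hrho n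
end

section
/- For every n̄ = (n₁,…,n_q) ∈ ℕ₀^q and t ≥ 0, p̂(n̄,t) = Σ over tuples ((n_{i1},…,n_{ik_i}) ∈ Ω(k_i,n_i) for each i = 1,…,q) of (Π_{i=1}^q Π_{j_i=1}^{k_i} λ_{ij_i}^{n_{ij_i}}/n_{ij_i}!) · Σ_{m=0}^∞ m^{Σ_{i=1}^q Σ_{j_i=1}^{k_i} n_{ij_i}} · Σ_{(x₁,…,x_{k₀})∈Ω(k₀,m)} Π_{j₀=1}^{k₀} ((μ_{j₀} e^{−j₀Λ} t)^{x_{j₀}}/x_{j₀}!) e^{−μ_{j₀} t}. -/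
/-- Multivariate IGCP state probabilities:
`p̂(n̄,t) = ∑_{m=0}^∞ (∏_i p_i(n_i,m)) p₀(m,t)`. -/
noncomputable def mvIgcpPmf (q : ℕ) (K : Fin q → ℕ) (L : (i : Fin q) → Fin (K i) → ℝ)
    (k0 : ℕ) (mu : Fin k0 → ℝ) (n : Fin q → ℕ) (t : ℝ) : ℝ :=
  ∑' m : ℕ, (∏ i : Fin q, gcpPmf (K i) (L i) (n i) m) * gcpPmf k0 mu m t

/-!
Given the value `m` of the outer process, each `p_i(n_i, m)` is a sum over `Ω(k_i, n_i)` of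
`(∏_j λ_{ij}^{x_j} / x_j!) · m^{|x|} · e^{-m Λ_i}` with `Λ_i = ∑_j λ_{ij}`, so the product
`∏_i p_i(n_i, m)` is `e^{-m Λ}` times a sum over tuples of multiplicity vectors. The
factor `e^{-m Λ}` is absorbed into `p₀(m, t)`: on `Ω(k₀, m)` we have `m = ∑ j y_j`, hence
`e^{-m Λ} = ∏_j (e^{-j Λ})^{y_j}`, which rescales each rate `μ_j` to `μ_j e^{-j Λ}`. The sums
over `m` and over the multiplicity vectors are exchanged by Tonelli; the double series converges
since `∏_i p_i(n_i, m) ≤ 1` and the `p₀(m, t)` sum to `1`.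
-/

open Finset Function Real
open scoped Nat

theorem hasSum_pow_div_factorial_mul_exp_neg (c : ℝ) :
    HasSum (fun r : ℕ => c ^ r / r ! * exp (-c)) 1 := by
  simpa [← exp_eq_exp_ℝ, ← exp_add] using
    (NormedSpace.expSeries_div_hasSum_exp c).mul_right (exp (-c))

theorem hasSum_pi_prod_of_nonneg {n : ℕ} {τ : Fin n → Type*} {f : (i : Fin n) → τ i → ℝ}
    {a : Fin n → ℝ} (hf : ∀ i x, 0 ≤ f i x) (ha : ∀ i, HasSum (f i) (a i)) :
    HasSum (fun x : (i : Fin n) → τ i => ∏ i, f i (x i)) (∏ i, a i) := by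
  induction n with
  | zero => simp
  | succ n ih =>
    set g : ((i : Fin n) → τ i.succ) → ℝ := fun x => ∏ i, f i.succ (x i)
    have htail : HasSum g (∏ i : Fin n, a i.succ) := ih (fun i => hf i.succ) fun i => ha i.succ
    have hf0 : 0 ≤ f 0 := hf 0
    have hg : 0 ≤ g := fun _ => prod_nonneg fun i _ => hf i.succ _
    have hprod := (ha 0).mul htail ((ha 0).summable.mul_of_nonneg htail.summable hf0 hg)
    rw [Fin.prod_univ_succ, ← (Fin.consEquiv τ).hasSum_iff]
    exact hprod.congr_fun fun p => by simp [g, Fin.prod_univ_succ, Fin.consEquiv]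

theorem tsum_comm_of_nonneg {α β : Type*} {F : α → β → ℝ} (hF : ∀ a b, 0 ≤ F a b)
    (hrow : ∀ a, Summable (F a)) (hsum : Summable fun a => ∑' b, F a b) :
    ∑' a, ∑' b, F a b = ∑' b, ∑' a, F a b :=
  ((summable_prod_of_nonneg fun p => hF p.1 p.2).2 ⟨hrow, hsum⟩).tsum_comm.symm

/-- The paper's `Ω(k, n)`. -/
def partitionMultiplicities (k n : ℕ) : Set (Fin k → ℕ) :=
  {x | ∑ j : Fin k, ((j : ℕ) + 1) * x j = n}

theorem finite_partitionMultiplicities (k n : ℕ) : (partitionMultiplicities k n).Finite := by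
  refine (Set.Finite.pi fun _ => Set.finite_Iic n).subset fun x hx j _ => ?_
  calc x j ≤ ((j : ℕ) + 1) * x j := Nat.le_mul_of_pos_left _ j.val.succ_pos
    _ ≤ ∑ i : Fin k, ((i : ℕ) + 1) * x i :=
      single_le_sum (f := fun i : Fin k => ((i : ℕ) + 1) * x i) (fun _ _ => Nat.zero_le _)
        (mem_univ j)
    _ = n := hx

theorem summable_ite_mem_partitionMultiplicities (k n : ℕ) (f : (Fin k → ℕ) → ℝ) :
    Summable fun x : Fin k → ℕ => if ∑ j : Fin k, ((j : ℕ) + 1) * x j = n then f x else 0 :=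
  summable_of_hasFiniteSupport <| (finite_partitionMultiplicities k n).subset
    fun _ hx => by_contra fun h => hx (if_neg h)

theorem summable_ite_forall_mem_partitionMultiplicities {q : ℕ} (K : Fin q → ℕ)
    (n : Fin q → ℕ) (f : ((i : Fin q) → Fin (K i) → ℕ) → ℝ) :
    Summable fun x : (i : Fin q) → Fin (K i) → ℕ =>
      if ∀ i, ∑ j : Fin (K i), ((j : ℕ) + 1) * x i j = n i then f x else 0 :=
  summable_of_hasFiniteSupport <|
    (Set.Finite.pi fun i => finite_partitionMultiplicities (K i) (n i)).subset
      fun _ hx => Set.mem_univ_pi.2 fun i => by_contra fun h => hx (if_neg fun hω => h (hω i))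

theorem gcpPmf_eq_exp_mul_tsum (k : ℕ) (lam : Fin k → ℝ) (n : ℕ) (t : ℝ) :
    gcpPmf k lam n t = exp (-(t * ∑ j, lam j)) *
      ∑' x : Fin k → ℕ, if ∑ j : Fin k, ((j : ℕ) + 1) * x j = n then
        (∏ j, lam j ^ x j / (x j)!) * t ^ ∑ j, x j else 0 := by
  rw [gcpPmf, ← tsum_mul_left]
  refine tsum_congr fun x => ?_
  split_ifs
  · rw [mul_sum, ← sum_neg_distrib, exp_sum, ← prod_pow_eq_pow_sum,
      ← prod_mul_distrib, ← prod_mul_distrib]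
    exact prod_congr rfl fun j _ => by rw [mul_pow, mul_comm t]; ring
  · rw [mul_zero]

theorem tsum_expTilt_eq_exp_mul_gcpPmf (k : ℕ) (lam : Fin k → ℝ) (Λ t : ℝ) (m : ℕ) :
    ∑' y : Fin k → ℕ, (if ∑ j : Fin k, ((j : ℕ) + 1) * y j = m then
      ∏ j : Fin k, (lam j * exp (-(((j : ℕ) + 1 : ℝ) * Λ)) * t) ^ y j / (y j)! *
        exp (-(lam j * t)) else 0) = exp (-(m * Λ)) * gcpPmf k lam m t := by
  rw [gcpPmf, ← tsum_mul_left]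
  refine tsum_congr fun y => ?_
  split_ifs with hy
  · have htilt : exp (-(m * Λ)) = ∏ j : Fin k, exp (-(((j : ℕ) + 1 : ℝ) * Λ)) ^ y j := by
      simp_rw [← exp_nat_mul, ← exp_sum, ← hy]
      push_cast
      rw [sum_mul, ← sum_neg_distrib]
      exact congrArg exp (sum_congr rfl fun j _ => by ring)
    rw [htilt, ← prod_mul_distrib]
    exact prod_congr rfl fun j _ => by rw [mul_right_comm _ (exp _), mul_pow]; ring
  · rw [mul_zero]

section GCP

variable {k : ℕ} {lam : Fin k → ℝ}

theorem gcpPmf_nonneg (hlam : ∀ j, 0 ≤ lam j) (n : ℕ) {t : ℝ} (ht : 0 ≤ t) :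
    0 ≤ gcpPmf k lam n t :=
  tsum_nonneg fun _ => by
    split_ifs
    exacts [prod_nonneg fun j _ => by have := hlam j; positivity, le_rfl]

theorem hasSum_gcpPmf (hlam : ∀ j, 0 ≤ lam j) {t : ℝ} (ht : 0 ≤ t) :
    HasSum (fun n => gcpPmf k lam n t) 1 := by
  set P : (Fin k → ℕ) → ℝ := fun x => ∏ j, (lam j * t) ^ x j / (x j)! * exp (-(lam j * t))
  have hP : HasSum P 1 := by
    simpa using hasSum_pi_prod_of_nonneg (fun j r => by have := hlam j; positivity)
      fun j => hasSum_pow_div_factorial_mul_exp_neg (lam j * t)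
  refine (hP.tsum_fiberwise fun x => ∑ j : Fin k, ((j : ℕ) + 1) * x j).congr_fun fun n => ?_
  rw [_root_.tsum_subtype _ P, gcpPmf]
  exact tsum_congr fun x => by
    simp only [Set.indicator, Set.mem_preimage, Set.mem_singleton_iff, P]

theorem gcpPmf_le_one (hlam : ∀ j, 0 ≤ lam j) (n : ℕ) {t : ℝ} (ht : 0 ≤ t) :
    gcpPmf k lam n t ≤ 1 :=
  le_hasSum (hasSum_gcpPmf hlam ht) n fun m _ => gcpPmf_nonneg hlam m ht

end GCP

theorem prod_gcpPmf_eq_exp_mul_tsum {q : ℕ} {K : Fin q → ℕ}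
    {L : (i : Fin q) → Fin (K i) → ℝ} (hL : ∀ i j, 0 ≤ L i j) (n : Fin q → ℕ) {t : ℝ}
    (ht : 0 ≤ t) :
    ∏ i, gcpPmf (K i) (L i) (n i) t = exp (-(t * ∑ i, ∑ j, L i j)) *
      ∑' x : (i : Fin q) → Fin (K i) → ℕ,
        if ∀ i, ∑ j : Fin (K i), ((j : ℕ) + 1) * x i j = n i then
          (∏ i, ∏ j, L i j ^ x i j / (x i j)!) * t ^ ∑ i, ∑ j, x i j else 0 := by
  have hfactor := hasSum_pi_prod_of_nonneg
    (fun i (x : Fin (K i) → ℕ) => by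
      split_ifs
      exacts [mul_nonneg (prod_nonneg fun j _ => by have := hL i j; positivity)
        (by positivity), le_rfl])
    fun i => (summable_ite_mem_partitionMultiplicities (K i) (n i)
      fun x => (∏ j, L i j ^ x j / (x j)!) * t ^ ∑ j, x j).hasSum
  simp_rw [gcpPmf_eq_exp_mul_tsum, prod_mul_distrib, ← exp_sum, ← hfactor.tsum_eq, mul_sum,
    sum_neg_distrib, Fintype.prod_ite_zero, prod_mul_distrib, prod_pow_eq_pow_sum]

theorem summable_prod_gcpPmf_mul_gcpPmf {q : ℕ} {K : Fin q → ℕ}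
    {L : (i : Fin q) → Fin (K i) → ℝ} (hL : ∀ i j, 0 ≤ L i j) {k0 : ℕ} {mu : Fin k0 → ℝ}
    (hmu : ∀ j0, 0 ≤ mu j0) (n : Fin q → ℕ) {t : ℝ} (ht : 0 ≤ t) :
    Summable fun m : ℕ => (∏ i, gcpPmf (K i) (L i) (n i) m) * gcpPmf k0 mu m t := by
  have hp : ∀ i (m : ℕ), 0 ≤ gcpPmf (K i) (L i) (n i) m := fun i m =>
    gcpPmf_nonneg (hL i) _ m.cast_nonneg
  refine (hasSum_gcpPmf hmu ht).summable.of_nonneg_of_le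
    (fun m => mul_nonneg (prod_nonneg fun i _ => hp i m) (gcpPmf_nonneg hmu m ht))
    fun m => mul_le_of_le_one_left (gcpPmf_nonneg hmu m ht) <|
      prod_le_one (fun i _ => hp i m) fun i _ => gcpPmf_le_one (hL i) _ m.cast_nonneg

theorem mvIgcp_pmf_general (q : ℕ) (K : Fin q → ℕ)
    (L : (i : Fin q) → Fin (K i) → ℝ) (hL : ∀ i j, 0 < L i j)
    (k0 : ℕ) (mu : Fin k0 → ℝ) (hmu : ∀ j0, 0 < mu j0)
    (n : Fin q → ℕ) (t : ℝ) (ht : 0 ≤ t) :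
    mvIgcpPmf q K L k0 mu n t =
      ∑' x : (i : Fin q) → Fin (K i) → ℕ,
        if (∀ i : Fin q, (∑ j : Fin (K i), ((j : ℕ) + 1) * x i j) = n i) then
          (∏ i : Fin q, ∏ j : Fin (K i), L i j ^ (x i j) / (Nat.factorial (x i j))) *
            ∑' m : ℕ,
              (m : ℝ) ^ (∑ i : Fin q, ∑ j : Fin (K i), x i j) *
                ∑' y : Fin k0 → ℕ,
                  if (∑ j0 : Fin k0, ((j0 : ℕ) + 1) * y j0) = m then
                    ∏ j0 : Fin k0,
                      (mu j0 *
                          Real.exp (-(((j0 : ℕ) + 1 : ℝ) *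
                            ∑ i : Fin q, ∑ j : Fin (K i), L i j)) * t) ^ (y j0) /
                        (Nat.factorial (y j0)) * Real.exp (-(mu j0 * t))
                  else 0
        else 0 := by
  have hL' : ∀ i j, 0 ≤ L i j := fun i j => (hL i j).le
  have hmu' : ∀ j0, 0 ≤ mu j0 := fun j0 => (hmu j0).le
  simp_rw [tsum_expTilt_eq_exp_mul_gcpPmf]
  set Λ := ∑ i, ∑ j, L i j
  set W : ℕ → ℝ := fun m => exp (-(m * Λ)) * gcpPmf k0 mu m t
  set G : ℕ → ((i : Fin q) → Fin (K i) → ℕ) → ℝ := fun m x =>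
    if ∀ i, ∑ j : Fin (K i), ((j : ℕ) + 1) * x i j = n i then
      (∏ i, ∏ j, L i j ^ x i j / (x i j)!) * (m : ℝ) ^ ∑ i, ∑ j, x i j else 0
  have hterm : ∀ m : ℕ,
      (∏ i, gcpPmf (K i) (L i) (n i) m) * gcpPmf k0 mu m t = ∑' x, G m x * W m := by
    intro m
    rw [prod_gcpPmf_eq_exp_mul_tsum hL' n m.cast_nonneg, tsum_mul_right]
    ring
  have hnonneg : ∀ m x, 0 ≤ G m x * W m := fun m x => by
    refine mul_nonneg ?_ (mul_nonneg (exp_nonneg _) (gcpPmf_nonneg hmu' m ht))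
    simp only [G]
    split_ifs
    exacts [mul_nonneg (prod_nonneg fun i _ => prod_nonneg fun j _ => by
      have := hL' i j; positivity) (by positivity), le_rfl]
  rw [mvIgcpPmf, tsum_congr hterm, tsum_comm_of_nonneg hnonneg
    (fun m => (summable_ite_forall_mem_partitionMultiplicities K n _).mul_right (W m))
    (by simpa only [← hterm] using summable_prod_gcpPmf_mul_gcpPmf hL' hmu' n ht)]
  refine tsum_congr fun x => ?_
  simp only [G]
  split_ifs
  · rw [← tsum_mul_left]
    exact tsum_congr fun m => by ring
  · simp

/-- explicit state probabilities of the multivariate IGCP. -/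
theorem mvIgcp_pmf (q : ℕ) (hq : 0 < q) (K : Fin q → ℕ) (hK : ∀ i, 0 < K i)
    (L : (i : Fin q) → Fin (K i) → ℝ) (hL : ∀ i j, 0 < L i j)
    (k0 : ℕ) (hk0 : 0 < k0) (mu : Fin k0 → ℝ) (hmu : ∀ j0, 0 < mu j0)
    (n : Fin q → ℕ) (t : ℝ) (ht : 0 ≤ t) :
    mvIgcpPmf q K L k0 mu n t =
      ∑' x : (i : Fin q) → Fin (K i) → ℕ,
        if (∀ i : Fin q, (∑ j : Fin (K i), ((j : ℕ) + 1) * x i j) = n i) then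
          (∏ i : Fin q, ∏ j : Fin (K i), L i j ^ (x i j) / (Nat.factorial (x i j))) *
            ∑' m : ℕ,
              (m : ℝ) ^ (∑ i : Fin q, ∑ j : Fin (K i), x i j) *
                ∑' y : Fin k0 → ℕ,
                  if (∑ j0 : Fin k0, ((j0 : ℕ) + 1) * y j0) = m then
                    ∏ j0 : Fin k0,
                      (mu j0 *
                          Real.exp (-(((j0 : ℕ) + 1 : ℝ) *
                            ∑ i : Fin q, ∑ j : Fin (K i), L i j)) * t) ^ (y j0) /
                        (Nat.factorial (y j0)) * Real.exp (-(mu j0 * t))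
                  else 0
        else 0 :=
  mvIgcp_pmf_general q K L hL k0 mu hmu n t ht
end
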